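/- Let K ≥ 2, d ≥ 1, γ > 0, and let D, Q be the Kd×Kd matrices defined from γ as below. Let U : ℝ^d → ℝ be twice continuously differentiable and suppose there are 0 < m ≤ L with 1 ≤ L such that m I_d ⪯ ∇²U(z) ⪯ L I_d for all z ∈ ℝ^d. For x = (x_1,…,x_K) ∈ (ℝ^d)^K define the Kd×Kd matrix J_b(x) := −(D+Q)·blockdiag(∇²U(x_1), I_d, …, I_d). Then for every x ∈ ℝ^{Kd}, ‖J_b(x)‖ ≤ L·max{1+2γ, 3γ}. -/

import Mathlib

open Matrix Kronecker

/-- The operator norm (induced by the Euclidean norms) of a real matrix. -/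
noncomputable def opNorm {m n : Type*} [Fintype m] [Fintype n] [DecidableEq n]
    (M : Matrix m n ℝ) : ℝ :=
  ‖LinearMap.toContinuousLinearMap (Matrix.toEuclideanLin M)‖

/-!
`J_b(x) = -(D + Q) B` with `B = blockdiag(∇²U(x₁), I, …, I)`, so `‖J_b(x)‖ ≤ (‖D‖ + ‖Q‖) ‖B‖`.
In the Loewner order `0 ⪯ B ⪯ L I` (since `0 ⪯ ∇²U ⪯ L I` and `1 ≤ L`), hence `‖B‖ ≤ L`, and
`D` is diagonal with entries in `[0, γ]`, so `‖D‖ ≤ γ`. For `Q = T_γ ⊗ I` use the Schur test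
`‖M‖² ≤ (max row sum of |M|) · (max column sum of |M|)`: every row and column of `T_γ` has at
most two nonzero entries, of absolute values `1, γ` or `γ, γ`, so `‖Q‖ ≤ max(1 + γ, 2γ)`; and
`γ + max(1 + γ, 2γ) = max(1 + 2γ, 3γ)`.
-/

open scoped MatrixOrder Matrix.Norms.L2Operator

lemma opNorm_eq_l2_opNorm {m n : Type*} [Fintype m] [Fintype n] [DecidableEq n]
    (M : Matrix m n ℝ) : opNorm M = ‖M‖ := rfl

lemma Finset.sum_ite_le_of_subsingleton {ι : Type*} (s : Finset ι) {P : ι → Prop}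
    [DecidablePred P] {c : ℝ} (hc : 0 ≤ c) (hP : {j | P j}.Subsingleton) :
    ∑ j ∈ s, (if P j then c else 0) ≤ c := by
  rw [Finset.sum_ite, Finset.sum_const_zero, add_zero, Finset.sum_const, nsmul_eq_mul]
  have hcard : (s.filter P).card ≤ 1 := Finset.card_le_one.2 fun a ha b hb =>
    hP (Finset.mem_filter.1 ha).2 (Finset.mem_filter.1 hb).2
  calc ((s.filter P).card : ℝ) * c ≤ 1 * c := by gcongr; exact_mod_cast hcard
    _ = c := one_mul c

namespace Matrix

variable {l m n : Type*}

lemma l2_opNorm_le_of_nonneg_of_le_smul_one [Fintype n] [DecidableEq n] {A : Matrix n n ℝ}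
    {c : ℝ} (hc : 0 ≤ c) (h0 : 0 ≤ A) (h1 : A ≤ c • 1) : ‖A‖ ≤ c := by
  have : IsSelfAdjoint A := .of_nonneg h0
  rw [← cfc_id' ℝ A]
  refine norm_cfc_le hc fun x hx => ?_
  rw [Real.norm_of_nonneg (spectrum_nonneg_of_nonneg h0 hx)]
  exact (le_algebraMap_iff_spectrum_le (r := c)).1
    (by rwa [Algebra.algebraMap_eq_smul_one]) x hx

lemma kronecker_le_kronecker_of_nonneg_left {𝕜 : Type*} [RCLike 𝕜] [Fintype l] [Fintype n]
    {P : Matrix l l 𝕜} {X Y : Matrix n n 𝕜} (hXY : X ≤ Y) (hP : 0 ≤ P) :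
    P ⊗ₖ X ≤ P ⊗ₖ Y := by
  have h : P ⊗ₖ Y - P ⊗ₖ X = P ⊗ₖ (Y - X) := by
    ext; simp [mul_sub]
  rw [le_iff, h]
  exact (nonneg_iff_posSemidef.1 hP).kronecker hXY

lemma one_le_smul_one [Fintype n] [DecidableEq n] {c : ℝ} (hc : 1 ≤ c) :
    (1 : Matrix n n ℝ) ≤ c • 1 := by
  rw [le_iff, show c • (1 : Matrix n n ℝ) - 1 = (c - 1) • 1 by rw [sub_smul, one_smul]]
  exact PosSemidef.one.smul (sub_nonneg.2 hc)

lemma l2_opNorm_diagonal_kronecker_add_le [Fintype l] [Fintype n] [DecidableEq l]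
    [DecidableEq n] {e : l → ℝ} (he0 : 0 ≤ e) (he1 : e ≤ 1) {X Y : Matrix n n ℝ} {c : ℝ}
    (hc : 0 ≤ c) (hX0 : 0 ≤ X) (hX : X ≤ c • 1) (hY0 : 0 ≤ Y) (hY : Y ≤ c • 1) :
    ‖diagonal e ⊗ₖ X + diagonal (1 - e) ⊗ₖ Y‖ ≤ c := by
  have hd : (0 : Matrix l l ℝ) ≤ diagonal e := nonneg_iff_posSemidef.2 (.diagonal he0)
  have hd' : (0 : Matrix l l ℝ) ≤ diagonal (1 - e) :=
    nonneg_iff_posSemidef.2 (.diagonal (sub_nonneg.2 he1))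
  refine l2_opNorm_le_of_nonneg_of_le_smul_one hc ?_ ?_
  · simpa using add_le_add (kronecker_le_kronecker_of_nonneg_left hX0 hd)
      (kronecker_le_kronecker_of_nonneg_left hY0 hd')
  calc diagonal e ⊗ₖ X + diagonal (1 - e) ⊗ₖ Y
      ≤ diagonal e ⊗ₖ (c • 1) + diagonal (1 - e) ⊗ₖ (c • 1) :=
        add_le_add (kronecker_le_kronecker_of_nonneg_left hX hd)
          (kronecker_le_kronecker_of_nonneg_left hY hd')
    _ = c • 1 := by
        rw [← add_kronecker, diagonal_add]
        simp [kronecker_smul]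

lemma sum_mulVec_sq_le_of_sum_abs_le [Fintype m] [Fintype n] {M : Matrix m n ℝ} {r c : ℝ}
    (hr : 0 ≤ r) (hrow : ∀ i, ∑ j, |M i j| ≤ r) (hcol : ∀ j, ∑ i, |M i j| ≤ c) (v : n → ℝ) :
    ∑ i, (M *ᵥ v) i ^ 2 ≤ r * c * ∑ j, v j ^ 2 := by
  -- Cauchy–Schwarz in each row, with weights `|M i j|`
  have hrow_sq : ∀ i, (M *ᵥ v) i ^ 2 ≤ r * ∑ j, |M i j| * v j ^ 2 := fun i =>
    calc (M *ᵥ v) i ^ 2 ≤ (∑ j, |M i j| * |v j|) ^ 2 := by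
          rw [← sq_abs, mulVec, dotProduct]
          gcongr
          exact (Finset.abs_sum_le_sum_abs _ _).trans_eq (by simp [abs_mul])
      _ ≤ (∑ j, |M i j|) * ∑ j, |M i j| * v j ^ 2 :=
          Finset.sum_sq_le_sum_mul_sum_of_sq_le_mul _ (fun j _ => abs_nonneg _)
            (fun j _ => by positivity) fun j _ => by rw [mul_pow, sq_abs (v j), ← mul_assoc, ← sq]
      _ ≤ r * ∑ j, |M i j| * v j ^ 2 := by gcongr; exact hrow i
  calc ∑ i, (M *ᵥ v) i ^ 2 ≤ ∑ i, r * ∑ j, |M i j| * v j ^ 2 :=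
        Finset.sum_le_sum fun i _ => hrow_sq i
    _ = r * ∑ j, (∑ i, |M i j|) * v j ^ 2 := by
        rw [← Finset.mul_sum, Finset.sum_comm]; simp_rw [Finset.sum_mul]
    _ ≤ r * ∑ j, c * v j ^ 2 := by gcongr with j; exact hcol j
    _ = r * c * ∑ j, v j ^ 2 := by rw [← Finset.mul_sum, mul_assoc]

lemma l2_opNorm_le_sqrt_of_sum_abs_le [Fintype m] [Fintype n] [DecidableEq n]
    {M : Matrix m n ℝ} {r c : ℝ} (hr : 0 ≤ r) (hrow : ∀ i, ∑ j, |M i j| ≤ r)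
    (hcol : ∀ j, ∑ i, |M i j| ≤ c) : ‖M‖ ≤ √(r * c) := by
  rw [l2_opNorm_def]
  refine ContinuousLinearMap.opNorm_le_bound _ (Real.sqrt_nonneg _) fun x => ?_
  rw [EuclideanSpace.norm_eq, EuclideanSpace.norm_eq,
    ← Real.sqrt_mul' _ (Finset.sum_nonneg fun _ _ => by positivity)]
  refine Real.sqrt_le_sqrt ?_
  simpa [Real.norm_eq_abs, sq_abs] using sum_mulVec_sq_le_of_sum_abs_le hr hrow hcol x.ofLp

lemma sum_abs_kronecker_one_row [Fintype m] [Fintype n] [DecidableEq n] (A : Matrix l m ℝ)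
    (p : l × n) : ∑ q : m × n, |(A ⊗ₖ (1 : Matrix n n ℝ)) p q| = ∑ j, |A p.1 j| := by
  simp [Fintype.sum_prod_type, one_apply, apply_ite abs]

lemma sum_abs_kronecker_one_col [Fintype l] [Fintype n] [DecidableEq n] (A : Matrix l m ℝ)
    (q : m × n) : ∑ p : l × n, |(A ⊗ₖ (1 : Matrix n n ℝ)) p q| = ∑ i, |A i q.1| := by
  simp [Fintype.sum_prod_type, one_apply, apply_ite abs]

lemma l2_opNorm_kronecker_one_le [Fintype l] [Fintype m] [Fintype n] [DecidableEq m]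
    [DecidableEq n] {A : Matrix l m ℝ} {r c : ℝ} (hr : 0 ≤ r) (hrow : ∀ i, ∑ j, |A i j| ≤ r)
    (hcol : ∀ j, ∑ i, |A i j| ≤ c) : ‖A ⊗ₖ (1 : Matrix n n ℝ)‖ ≤ √(r * c) :=
  l2_opNorm_le_sqrt_of_sum_abs_le hr (fun p => (sum_abs_kronecker_one_row A p).trans_le (hrow _))
    fun q => (sum_abs_kronecker_one_col A q).trans_le (hcol _)

lemma l2_opNorm_diagonal_kronecker_one_le [Fintype l] [Fintype n] [DecidableEq l]
    [DecidableEq n] {v : l → ℝ} {c : ℝ} (hc : 0 ≤ c) (hv : ∀ i, |v i| ≤ c) :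
    ‖diagonal v ⊗ₖ (1 : Matrix n n ℝ)‖ ≤ c := by
  rw [← diagonal_one, diagonal_kronecker_diagonal, l2_opNorm_diagonal]
  exact (pi_norm_le_iff_of_nonneg hc).2 fun p => by simpa using hv p.1

end Matrix

/-- The matrix `T_γ`. -/
def couplingMatrix (K : ℕ) (γ : ℝ) : Matrix (Fin K) (Fin K) ℝ :=
  of fun i j =>
    if (i : ℕ) + 1 = (j : ℕ) then (if (i : ℕ) = 0 then -1 else -γ)
    else if (j : ℕ) + 1 = (i : ℕ) then (if (j : ℕ) = 0 then 1 else γ)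
    else 0

lemma couplingMatrix_transpose (K : ℕ) (γ : ℝ) :
    (couplingMatrix K γ)ᵀ = -couplingMatrix K γ := by
  ext i j
  rw [transpose_apply, neg_apply]
  simp only [couplingMatrix, of_apply]
  split_ifs <;> first | omega | ring

lemma sum_abs_couplingMatrix_le {K : ℕ} {γ : ℝ} (hγ : 0 ≤ γ) (i : Fin K) :
    ∑ j, |couplingMatrix K γ i j| ≤ max (1 + γ) (2 * γ) := by
  set a : ℝ := if (i : ℕ) = 0 then 1 else γ
  set b : ℝ := if (i : ℕ) = 1 then 1 else γ
  have ha : 0 ≤ a := by positivity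
  have hb : 0 ≤ b := by positivity
  have hentry : ∀ j, |couplingMatrix K γ i j| ≤
      (if (j : ℕ) = i + 1 then a else 0) + (if (j : ℕ) + 1 = i then b else 0) := by
    intro j
    simp only [couplingMatrix, of_apply, a, b]
    split_ifs <;> first | omega | simp [abs_of_nonneg hγ]
  calc ∑ j, |couplingMatrix K γ i j|
      ≤ ∑ j : Fin K, ((if (j : ℕ) = i + 1 then a else 0) + (if (j : ℕ) + 1 = i then b else 0)) :=
        Finset.sum_le_sum fun j _ => hentry j
    _ ≤ a + b := by
        rw [Finset.sum_add_distrib]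
        gcongr <;> refine Finset.sum_ite_le_of_subsingleton _ (by assumption)
          fun j hj k hk => ?_ <;> simp only [Set.mem_ofPred_eq] at hj hk <;> omega
    _ ≤ max (1 + γ) (2 * γ) := by
        simp only [a, b]
        split_ifs <;>
          first | omega | linarith [le_max_left (1 + γ) (2 * γ), le_max_right (1 + γ) (2 * γ)]

lemma l2_opNorm_couplingMatrix_kronecker_one_le {n : Type*} [Fintype n] [DecidableEq n]
    {K : ℕ} {γ : ℝ} (hγ : 0 ≤ γ) :
    ‖couplingMatrix K γ ⊗ₖ (1 : Matrix n n ℝ)‖ ≤ max (1 + γ) (2 * γ) := by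
  have hcol : ∀ j, ∑ i, |couplingMatrix K γ i j| ≤ max (1 + γ) (2 * γ) := fun j => by
    refine le_of_eq_of_le (Finset.sum_congr rfl fun i _ => ?_) (sum_abs_couplingMatrix_le hγ j)
    rw [← transpose_apply (couplingMatrix K γ), couplingMatrix_transpose, neg_apply, abs_neg]
  have h := l2_opNorm_kronecker_one_le (n := n) (by positivity) (sum_abs_couplingMatrix_le hγ)
    hcol
  rwa [Real.sqrt_mul_self (by positivity)] at h

lemma l2_opNorm_drift_le {n : Type*} [Fintype n] [DecidableEq n] {K : ℕ} {γ : ℝ}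
    (hγ : 0 ≤ γ) :
    ‖(diagonal fun i : Fin K => if (i : ℕ) = K - 1 then γ else 0) ⊗ₖ (1 : Matrix n n ℝ) +
      couplingMatrix K γ ⊗ₖ 1‖ ≤ max (1 + 2 * γ) (3 * γ) := by
  have hD : ‖(diagonal fun i : Fin K => if (i : ℕ) = K - 1 then γ else 0) ⊗ₖ
      (1 : Matrix n n ℝ)‖ ≤ γ :=
    l2_opNorm_diagonal_kronecker_one_le hγ fun i => by split_ifs <;> simp [abs_of_nonneg hγ, hγ]
  calc _ ≤ _ := norm_add_le _ _
    _ ≤ γ + max (1 + γ) (2 * γ) := add_le_add hD (l2_opNorm_couplingMatrix_kronecker_one_le hγ)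
    _ = max (1 + 2 * γ) (3 * γ) := by rw [add_max]; ring_nf

theorem stmt1 (K d : ℕ) (hK : 2 ≤ K) (γ : ℝ) (hγ : 0 < γ)
    (Tγ : Matrix (Fin K) (Fin K) ℝ)
    (hT : ∀ i j : Fin K,
      Tγ i j =
        if (i : ℕ) + 1 = (j : ℕ) then (if (i : ℕ) = 0 then -1 else -γ)
        else if (j : ℕ) + 1 = (i : ℕ) then (if (j : ℕ) = 0 then 1 else γ)
        else 0)
    (D Q : Matrix (Fin K × Fin d) (Fin K × Fin d) ℝ)
    (hD : D = (Matrix.diagonal fun i : Fin K => if (i : ℕ) = K - 1 then γ else 0) ⊗ₖ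
        (1 : Matrix (Fin d) (Fin d) ℝ))
    (hQ : Q = Tγ ⊗ₖ (1 : Matrix (Fin d) (Fin d) ℝ))
    (m L : ℝ) (hm : 0 < m) (hL1 : 1 ≤ L)
    -- `Hess z` is the Hessian matrix of `U` at `z`
    (Hess : EuclideanSpace ℝ (Fin d) → Matrix (Fin d) (Fin d) ℝ)
    -- `m I ⪯ ∇²U(z) ⪯ L I`
    (hlow : ∀ z, (Hess z - m • (1 : Matrix (Fin d) (Fin d) ℝ)).PosSemidef)
    (hupp : ∀ z, (L • (1 : Matrix (Fin d) (Fin d) ℝ) - Hess z).PosSemidef)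
    -- `B z` is the block-diagonal matrix `blockdiag(∇²U(z), I, …, I)`
    (B : EuclideanSpace ℝ (Fin d) → Matrix (Fin K × Fin d) (Fin K × Fin d) ℝ)
    (hB : ∀ z p q, B z p q =
      if p.1 = q.1 then
        (if (p.1 : ℕ) = 0 then Hess z p.2 q.2 else if p.2 = q.2 then 1 else 0)
      else 0)
    -- `Jb x` is the Jacobian `−(D+Q)·blockdiag(∇²U(x₁), I, …, I)`
    (Jb : (Fin K → EuclideanSpace ℝ (Fin d)) → Matrix (Fin K × Fin d) (Fin K × Fin d) ℝ)
    (hJb : ∀ x, Jb x = -((D + Q) * B (x ⟨0, by omega⟩))) :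
    ∀ x, opNorm (Jb x) ≤ L * max (1 + 2 * γ) (3 * γ) := by
  intro x
  set z := x ⟨0, by omega⟩
  set e : Fin K → ℝ := fun i => if (i : ℕ) = 0 then 1 else 0
  have hTγ : Tγ = couplingMatrix K γ := by ext i j; exact hT i j
  have hBz : B z = diagonal e ⊗ₖ Hess z + diagonal (1 - e) ⊗ₖ 1 := by
    ext p q
    rw [hB]
    simp only [e, kroneckerMap_apply, Matrix.add_apply, diagonal_apply, one_apply, Pi.sub_apply,
      Pi.one_apply]
    split_ifs <;> simp_all
  have hHess : 0 ≤ Hess z :=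
    (nonneg_iff_posSemidef.2 (PosSemidef.one.smul hm.le)).trans (le_iff.2 (hlow z))
  have hB_le : ‖B z‖ ≤ L := by
    rw [hBz]
    exact l2_opNorm_diagonal_kronecker_add_le (fun i => by positivity)
      (fun i => by simp only [e]; split_ifs <;> norm_num) (by linarith) hHess
      (le_iff.2 (hupp z)) (nonneg_iff_posSemidef.2 PosSemidef.one) (one_le_smul_one hL1)
  rw [opNorm_eq_l2_opNorm, hJb, norm_neg, hD, hQ, hTγ]
  calc _ ≤ _ := l2_opNorm_mul _ _
    _ ≤ max (1 + 2 * γ) (3 * γ) * L := by gcongr; exact l2_opNorm_drift_le hγ.le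
    _ = L * max (1 + 2 * γ) (3 * γ) := mul_comm _ _
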